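/- arXiv:math/0311261 — 7 statements merged into one kernel-verified Lean document; each statement's English description precedes it below -/
import Mathlib

section
/- Fix pairwise distinct complex numbers u_1, …, u_n and define H_k : (M_m(ℂ))^n → ℂ by H_k(A_1,…,A_n) := ∑_{l≠k} tr(A_k A_l)/(u_k−u_l). Define matrices G_{k,p} := A_k/(u_k−u_p) for p ≠ k and G_{k,k} := ∑_{l≠k} A_l/(u_k−u_l). Then: (a) H_k is differentiable and its matrix gradient with respect to A_p is G_{k,p}, i.e. for every m×m matrix X, (d/dε) H_k(A_1,…,A_p+εX,…,A_n)|_{ε=0} = tr(X · G_{k,p}); (b) the Lie–Poisson Hamilton equations ∂A_p/∂u_k = [G_{k,p}, A_p] coincide with the Schlesinger equations, namely [G_{k,p}, A_p] = [A_p, A_k]/(u_p−u_k) for p ≠ k, and [G_{k,k}, A_k] = −∑_{j≠k} [A_k, A_j]/(u_k−u_j). -/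
open Matrix

attribute [local instance] Matrix.normedAddCommGroup Matrix.normedSpace

/-!
Each summand `tr(A_k A_l)/(u_k - u_l)` of `H_k` is bilinear in `(A_k, A_l)`, and `A_p` occurs in at
most one factor of it, so `H_k` is affine along `ε ↦ A_p + ε X`: by `tr(XY) = tr(YX)`,
`H_k(…, A_p + ε X, …) = H_k(A) + ε tr(X G_{k,p})` holds exactly, which gives the derivative.
Differentiability holds because `H_k` is a polynomial in the matrix entries, and the Schlesinger
form of `[G_{k,p}, A_p]` follows from bilinearity of the commutator.
-/

open Finset

section

variable {𝕜 ι m : Type*} [NontriviallyNormedField 𝕜] [Fintype m]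

theorem Differentiable.matrix_trace_mul {E : Type*} [NormedAddCommGroup E] [NormedSpace 𝕜 E]
    {f g : E → Matrix m m 𝕜} (hf : Differentiable 𝕜 f) (hg : Differentiable 𝕜 g) :
    Differentiable 𝕜 fun x => trace (f x * g x) := by
  have hentry : ∀ {h : E → Matrix m m 𝕜}, Differentiable 𝕜 h → ∀ i j,
      Differentiable 𝕜 fun x => h x i j := fun hh i j =>
    differentiable_pi.1 (differentiable_pi.1 hh i) j
  simp only [trace, Matrix.diag, mul_apply]
  exact Differentiable.fun_sum fun i _ => Differentiable.fun_sum fun j _ =>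
    (hentry hf i j).mul (hentry hg j i)

variable [Fintype ι] [DecidableEq ι]

def schlesingerHamiltonian (u : ι → 𝕜) (k : ι) (B : ι → Matrix m m 𝕜) : 𝕜 :=
  ∑ l ∈ univ.erase k, trace (B k * B l) / (u k - u l)

def schlesingerGradient (u : ι → 𝕜) (k : ι) (A : ι → Matrix m m 𝕜) (p : ι) : Matrix m m 𝕜 :=
  if p = k then ∑ l ∈ univ.erase k, (u k - u l)⁻¹ • A l else (u k - u p)⁻¹ • A k

theorem differentiable_schlesingerHamiltonian (u : ι → 𝕜) (k : ι) :
    Differentiable 𝕜 (schlesingerHamiltonian (m := m) u k) := by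
  unfold schlesingerHamiltonian
  simp only [div_eq_mul_inv]
  exact Differentiable.fun_sum fun l _ =>
    ((differentiable_apply k).matrix_trace_mul (differentiable_apply l)).mul_const _

theorem schlesingerHamiltonian_update_add_smul (u : ι → 𝕜) (k : ι) (A : ι → Matrix m m 𝕜)
    (p : ι) (X : Matrix m m 𝕜) (ε : 𝕜) :
    schlesingerHamiltonian u k (Function.update A p (A p + ε • X)) =
      schlesingerHamiltonian u k A + ε * trace (X * schlesingerGradient u k A p) := by
  unfold schlesingerHamiltonian schlesingerGradient
  split_ifs with hp
  · subst hp
    rw [Matrix.mul_sum, trace_sum, Finset.mul_sum, ← Finset.sum_add_distrib]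
    refine Finset.sum_congr rfl fun l hl => ?_
    rw [Function.update_self, Function.update_of_ne (Finset.ne_of_mem_erase hl), add_mul,
      trace_add, smul_mul_assoc, mul_smul_comm, trace_smul, trace_smul, smul_eq_mul,
      smul_eq_mul, trace_mul_comm X]
    ring
  · have hpk : p ∈ univ.erase k := Finset.mem_erase.2 ⟨hp, Finset.mem_univ p⟩
    rw [← Finset.add_sum_erase _ _ hpk, ← Finset.add_sum_erase _ _ hpk]
    have hrest : ∀ l ∈ (univ.erase k).erase p,
        trace (Function.update A p (A p + ε • X) k * Function.update A p (A p + ε • X) l) /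
          (u k - u l) = trace (A k * A l) / (u k - u l) := fun l hl => by
      rw [Function.update_of_ne (Finset.ne_of_mem_erase hl), Function.update_of_ne (Ne.symm hp)]
    rw [Finset.sum_congr rfl hrest, Function.update_self, Function.update_of_ne (Ne.symm hp),
      Matrix.mul_add, trace_add, mul_smul_comm, mul_smul_comm, trace_smul, trace_smul, smul_eq_mul,
      smul_eq_mul, trace_mul_comm X]
    ring

theorem hasDerivAt_schlesingerHamiltonian_update (u : ι → 𝕜) (k : ι) (A : ι → Matrix m m 𝕜)
    (p : ι) (X : Matrix m m 𝕜) :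
    HasDerivAt (fun ε : 𝕜 => schlesingerHamiltonian u k (Function.update A p (A p + ε • X)))
      (trace (X * schlesingerGradient u k A p)) 0 := by
  simp only [schlesingerHamiltonian_update_add_smul]
  simpa using ((hasDerivAt_id (0 : 𝕜)).mul_const _).const_add (schlesingerHamiltonian u k A)

theorem schlesingerGradient_commutator_of_ne (u : ι → 𝕜) {k p : ι} (A : ι → Matrix m m 𝕜)
    (hp : p ≠ k) :
    schlesingerGradient u k A p * A p - A p * schlesingerGradient u k A p =
      (u p - u k)⁻¹ • (A p * A k - A k * A p) := by
  rw [schlesingerGradient, if_neg hp, smul_mul_assoc, mul_smul_comm, ← smul_sub, ← neg_sub (u k),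
    inv_neg, neg_smul, ← smul_neg, neg_sub]

theorem schlesingerGradient_commutator_self (u : ι → 𝕜) (k : ι) (A : ι → Matrix m m 𝕜) :
    schlesingerGradient u k A k * A k - A k * schlesingerGradient u k A k =
      -∑ j ∈ univ.erase k, (u k - u j)⁻¹ • (A k * A j - A j * A k) := by
  rw [schlesingerGradient, if_pos rfl, Finset.sum_mul, Matrix.mul_sum, ← Finset.sum_sub_distrib,
    ← Finset.sum_neg_distrib]
  refine Finset.sum_congr rfl fun j _ => ?_
  rw [smul_mul_assoc, mul_smul_comm, ← smul_sub, ← smul_neg, neg_sub]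

end

theorem stmt_1_general (n m : ℕ)
    (u : Fin n → ℂ)
    (A : Fin n → Matrix (Fin m) (Fin m) ℂ)
    (k : Fin n)
    (Hfun : (Fin n → Matrix (Fin m) (Fin m) ℂ) → ℂ)
    (hH : ∀ B, Hfun B = ∑ l ∈ Finset.univ.erase k, trace (B k * B l) / (u k - u l))
    (G : Fin n → Matrix (Fin m) (Fin m) ℂ)
    (hGoff : ∀ p, p ≠ k → G p = (u k - u p)⁻¹ • A k)
    (hGk : G k = ∑ l ∈ Finset.univ.erase k, (u k - u l)⁻¹ • A l) :
    Differentiable ℂ Hfun ∧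
    (∀ (p : Fin n) (X : Matrix (Fin m) (Fin m) ℂ),
      HasDerivAt (fun ε : ℂ => Hfun (Function.update A p (A p + ε • X)))
        (trace (X * G p)) 0) ∧
    (∀ p, p ≠ k →
      G p * A p - A p * G p = (u p - u k)⁻¹ • (A p * A k - A k * A p)) ∧
    (G k * A k - A k * G k
      = -∑ j ∈ Finset.univ.erase k, (u k - u j)⁻¹ • (A k * A j - A j * A k)) := by
  obtain rfl : Hfun = schlesingerHamiltonian u k := funext hH
  obtain rfl : G = schlesingerGradient u k A := funext fun p => by
    by_cases hp : p = k
    · rw [hp, hGk, schlesingerGradient, if_pos rfl]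
    · rw [hGoff p hp, schlesingerGradient, if_neg hp]
  exact ⟨differentiable_schlesingerHamiltonian u k, hasDerivAt_schlesingerHamiltonian_update u k A,
    fun p hp => schlesingerGradient_commutator_of_ne u A hp,
    schlesingerGradient_commutator_self u k A⟩

/-- The Schlesinger equations as time-dependent Hamiltonian systems:
the Hamiltonian `H_k` is differentiable with matrix gradient `G_{k,p}` with respect to `A_p`,
and the Lie–Poisson Hamilton equations `∂A_p/∂u_k = [G_{k,p}, A_p]` coincide with the
Schlesinger equations. -/
theorem stmt_1 (n m : ℕ)
    (u : Fin n → ℂ) (hu : Function.Injective u)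
    (A : Fin n → Matrix (Fin m) (Fin m) ℂ)
    (k : Fin n)
    (Hfun : (Fin n → Matrix (Fin m) (Fin m) ℂ) → ℂ)
    (hH : ∀ B, Hfun B = ∑ l ∈ Finset.univ.erase k, trace (B k * B l) / (u k - u l))
    (G : Fin n → Matrix (Fin m) (Fin m) ℂ)
    (hGoff : ∀ p, p ≠ k → G p = (u k - u p)⁻¹ • A k)
    (hGk : G k = ∑ l ∈ Finset.univ.erase k, (u k - u l)⁻¹ • A l) :
    Differentiable ℂ Hfun ∧
    (∀ (p : Fin n) (X : Matrix (Fin m) (Fin m) ℂ),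
      HasDerivAt (fun ε : ℂ => Hfun (Function.update A p (A p + ε • X)))
        (trace (X * G p)) 0) ∧
    (∀ p, p ≠ k →
      G p * A p - A p * G p = (u p - u k)⁻¹ • (A p * A k - A k * A p)) ∧
    (G k * A k - A k * G k
      = -∑ j ∈ Finset.univ.erase k, (u k - u j)⁻¹ • (A k * A j - A j * A k)) :=
  stmt_1_general n m u A k Hfun hH G hGoff hGk
end

section
/- Fix pairwise distinct complex numbers u_1, …, u_n and m×m complex matrices A_1, …, A_n. Define G_{k,p} := A_k/(u_k−u_p) for p ≠ k and G_{k,k} := ∑_{l≠k} A_l/(u_k−u_l). Then for all k ≠ l: (a) ∑_{p=1}^n tr( A_p · [G_{k,p}, G_{l,p}] ) = 0 (i.e. the Schlesinger Hamiltonians Poisson commute with respect to the Lie–Poisson bracket {F,G}(A) = ∑_p tr(A_p [∇_p F, ∇_p G])); and (b) regarding H_k = ∑_{j≠k} tr(A_k A_j)/(u_k−u_j) as a function of (u_1,…,u_n) with the matrices fixed, ∂H_k/∂u_l = ∂H_l/∂u_k, both sides being equal to tr(A_k A_l)/(u_k−u_l)^2. -/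
/-!
Write `r i j = (u i - u j)⁻¹` and `c j = tr (A j ⁅A k, A l⁆)`. By bilinearity of the bracket and
cyclicity of `X, Y, Z ↦ tr (X ⁅Y, Z⁆)`, the Lie–Poisson bracket of `H k` and `H l` equals
`∑ j, (r k j * r l j - r k j * r l k - r k l * r l j) * c j`. Here `c k = c l = 0`, and for
every other `j` the coefficient vanishes by the partial fraction identity
`r k j * r l j = r k l * (r l j - r k j)`. For the second claim, only the `j = l` term of `H k`
depends on `u l`, and the derivative of `tr (A k A l) / (u k - t)` at `t = u l` is symmetric
in `k` and `l`.
-/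

open Matrix

open Finset Function

theorem inv_sub_mul_inv_sub {K : Type*} [Field K] {a b c : K} (hab : a ≠ b) (hac : a ≠ c)
    (hbc : b ≠ c) : (a - c)⁻¹ * (b - c)⁻¹ = (a - b)⁻¹ * ((b - c)⁻¹ - (a - c)⁻¹) := by
  field_simp [sub_ne_zero.2 hab, sub_ne_zero.2 hac, sub_ne_zero.2 hbc]
  ring

section LiePoisson

attribute [local instance] LieRing.ofAssociativeRing

variable {m R : Type*} [Fintype m] [DecidableEq m] [CommRing R]

theorem Matrix.trace_mul_lie_cycle (X Y Z : Matrix m m R) :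
    trace (X * ⁅Y, Z⁆) = trace (Y * ⁅Z, X⁆) := by
  simp only [Ring.lie_def, Matrix.mul_sub, trace_sub, ← Matrix.mul_assoc]
  rw [trace_mul_cycle Y Z X, trace_mul_cycle Y X Z, trace_mul_cycle Z Y X]

theorem Matrix.trace_mul_lie_self_right (X Y : Matrix m m R) : trace (X * ⁅Y, X⁆) = 0 := by
  rw [trace_mul_lie_cycle, lie_self, Matrix.mul_zero, trace_zero]

theorem Matrix.trace_mul_lie_self_left (X Y : Matrix m m R) : trace (X * ⁅X, Y⁆) = 0 := by
  rw [← lie_skew, Matrix.mul_neg, trace_neg, trace_mul_lie_self_right, neg_zero]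

theorem sum_trace_mul_lie_schlesinger_gradient_eq_zero {K ι : Type*} [Field K] [Fintype ι]
    [DecidableEq ι] {u : ι → K} (hu : Injective u)
    (A : ι → Matrix m m K) {G : ι → ι → Matrix m m K}
    (hGoff : ∀ k p, p ≠ k → G k p = (u k - u p)⁻¹ • A k)
    (hGdiag : ∀ k, G k k = ∑ l ∈ univ.erase k, (u k - u l)⁻¹ • A l)
    {k l : ι} (hkl : k ≠ l) :
    ∑ p, trace (A p * ⁅G k p, G l p⁆) = 0 := by
  set r : ι → ι → K := fun i j => (u i - u j)⁻¹ with hr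
  set c : ι → K := fun j => trace (A j * ⁅A k, A l⁆) with hc
  have hck : c k = 0 := trace_mul_lie_self_left _ _
  have hcl : c l = 0 := trace_mul_lie_self_right _ _
  have hdiag : ∀ i, G i i = ∑ j, r i j • A j := fun i => by
    -- the added `j = i` term is `0⁻¹ • A i = 0`
    rw [hGdiag, sum_erase]
    simp
  have hterm_k : trace (A k * ⁅G k k, G l k⁆) = -∑ j, r k j * r l k * c j := by
    simp only [hdiag, hGoff l k hkl, sum_lie, smul_lie, lie_smul, Matrix.mul_smul,
      trace_sum, Finset.mul_sum, trace_smul, smul_eq_mul, ← sum_neg_distrib]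
    refine sum_congr rfl fun j _ => ?_
    rw [hc, hr, trace_mul_lie_cycle, ← lie_skew, Matrix.mul_neg, trace_neg]
    ring
  have hterm_l : trace (A l * ⁅G k l, G l l⁆) = -∑ j, r k l * r l j * c j := by
    simp only [hdiag, hGoff k l hkl.symm, lie_sum, smul_lie, lie_smul,
      Matrix.mul_smul, trace_sum, Finset.mul_sum, trace_smul, smul_eq_mul, ← sum_neg_distrib]
    refine sum_congr rfl fun j _ => ?_
    rw [hc, hr, ← trace_mul_lie_cycle, ← lie_skew, Matrix.mul_neg, trace_neg]
    ring
  have hterm_rest : ∑ p ∈ (univ.erase k).erase l, trace (A p * ⁅G k p, G l p⁆) =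
      ∑ p, r k p * r l p * c p := by
    calc ∑ p ∈ (univ.erase k).erase l, trace (A p * ⁅G k p, G l p⁆)
        = ∑ p ∈ (univ.erase k).erase l, r k p * r l p * c p := sum_congr rfl fun p hp => by
          obtain ⟨hpl, hpk⟩ : p ≠ l ∧ p ≠ k := by simpa using hp
          simp only [hGoff k p hpk, hGoff l p hpl, smul_lie, lie_smul, Matrix.mul_smul,
            trace_smul, smul_eq_mul]
          ring
      _ = ∑ p, r k p * r l p * c p := sum_subset (subset_univ _) fun p _ hp => by
          obtain rfl | rfl : p = k ∨ p = l := by simp at hp; tauto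
          · rw [hck, mul_zero]
          · rw [hcl, mul_zero]
  calc ∑ p, trace (A p * ⁅G k p, G l p⁆)
      = trace (A k * ⁅G k k, G l k⁆) + (trace (A l * ⁅G k l, G l l⁆) +
          ∑ p ∈ (univ.erase k).erase l, trace (A p * ⁅G k p, G l p⁆)) := by
        rw [← add_sum_erase _ _ (mem_univ k),
          ← add_sum_erase _ _ (mem_erase.2 ⟨hkl.symm, mem_univ l⟩)]
    _ = ∑ j, (r k j * r l j - r k j * r l k - r k l * r l j) * c j := by
        rw [hterm_k, hterm_l, hterm_rest]
        simp only [sub_mul, sum_sub_distrib]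
        ring
    _ = 0 := sum_eq_zero fun j _ => by
        by_cases hjk : j = k
        · rw [hjk, hck, mul_zero]
        by_cases hjl : j = l
        · rw [hjl, hcl, mul_zero]
        simp only [hr]
        rw [inv_sub_mul_inv_sub (hu.ne hkl) (hu.ne (Ne.symm hjk)) (hu.ne (Ne.symm hjl)),
          ← neg_sub (u k) (u l), inv_neg]
        ring

end LiePoisson

theorem hasDerivAt_div_const_sub {𝕜 : Type*} [NontriviallyNormedField 𝕜] (a c x : 𝕜)
    (hx : c ≠ x) : HasDerivAt (fun t => a / (c - t)) (a / (c - x) ^ 2) x := by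
  have := (((hasDerivAt_id x).const_sub c).inv (sub_ne_zero.2 hx)).const_mul a
  simpa [div_eq_mul_inv] using this

theorem hasDerivAt_sum_div_update_sub {𝕜 ι : Type*} [NontriviallyNormedField 𝕜] [DecidableEq ι]
    (s : Finset ι) (a u : ι → 𝕜) {k l : ι} (hkl : k ≠ l) (hl : l ∈ s) (hu : u k ≠ u l) :
    HasDerivAt (fun t => ∑ j ∈ s, a j / (update u l t k - update u l t j))
      (a l / (u k - u l) ^ 2) (u l) := by
  have hsplit : (fun t => ∑ j ∈ s, a j / (update u l t k - update u l t j)) =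
      fun t => a l / (u k - t) + ∑ j ∈ s.erase l, a j / (u k - u j) := by
    funext t
    rw [← add_sum_erase s _ hl]
    congr 1
    · rw [update_self, update_of_ne hkl]
    · refine sum_congr rfl fun j hj => ?_
      rw [update_of_ne hkl, update_of_ne (ne_of_mem_erase hj)]
  rw [hsplit]
  exact (hasDerivAt_div_const_sub _ _ _ hu).add_const _

/-- The Schlesinger Hamiltonians Poisson commute with respect to the Lie–Poisson bracket,
and satisfy `∂H_k/∂u_l = ∂H_l/∂u_k`, both being equal to `tr(A_k A_l)/(u_k−u_l)²`. -/
theorem stmt_2 (n m : ℕ)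
    (u : Fin n → ℂ) (hu : Function.Injective u)
    (A : Fin n → Matrix (Fin m) (Fin m) ℂ)
    (G : Fin n → Fin n → Matrix (Fin m) (Fin m) ℂ)
    (hGoff : ∀ k p, p ≠ k → G k p = (u k - u p)⁻¹ • A k)
    (hGdiag : ∀ k, G k k = ∑ l ∈ Finset.univ.erase k, (u k - u l)⁻¹ • A l)
    (Hfun : (Fin n → ℂ) → Fin n → ℂ)
    (hH : ∀ v k, Hfun v k = ∑ j ∈ Finset.univ.erase k, trace (A k * A j) / (v k - v j))
    (k l : Fin n) (hkl : k ≠ l) :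
    (∑ p, trace (A p * (G k p * G l p - G l p * G k p)) = 0) ∧
    HasDerivAt (fun t : ℂ => Hfun (Function.update u l t) k)
      (trace (A k * A l) / (u k - u l) ^ 2) (u l) ∧
    HasDerivAt (fun t : ℂ => Hfun (Function.update u k t) l)
      (trace (A k * A l) / (u k - u l) ^ 2) (u k) := by
  have hsym : trace (A l * A k) / (u l - u k) ^ 2 = trace (A k * A l) / (u k - u l) ^ 2 := by
    rw [trace_mul_comm, ← neg_sub, neg_sq]
  simp only [hH]
  refine ⟨?_, ?_, ?_⟩
  · simpa only [Ring.lie_def] using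
      sum_trace_mul_lie_schlesinger_gradient_eq_zero hu A hGoff hGdiag hkl
  · exact hasDerivAt_sum_div_update_sub _ _ u hkl (mem_erase.2 ⟨hkl.symm, mem_univ l⟩) (hu.ne hkl)
  · exact hsym ▸ hasDerivAt_sum_div_update_sub _ _ u hkl.symm (mem_erase.2 ⟨hkl, mem_univ k⟩)
      (hu.ne hkl.symm)
end

section
/- Let U be an open subset of {u ∈ ℂ^n : u_i ≠ u_j for i ≠ j} and let A_1, …, A_n : U → M_m(ℂ) be differentiable functions satisfying the Schlesinger equations. Then for every k ∈ {1,…,n}: ∂/∂u_k ( ∑_{l=1}^n u_l A_l(u) ) = A_k(u) + [A_k(u), A_∞(u)], where A_∞(u) := −(A_1(u)+⋯+A_n(u)). In particular, if A_∞ is identically equal to the diagonal matrix diag(λ_1,…,λ_m), then for all matrix indices i, j: ∂/∂u_k ∑_{l=1}^n u_l (A_l(u))_{ji} = (1 + λ_i − λ_j)·(A_k(u))_{ji}. -/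
/-!
Differentiating `∑ₗ uₗ Aₗ` along `∂/∂u_k` gives `A_k + ∑ₗ uₗ ∂_k Aₗ`. By the Schlesinger
equations the `l`-th term of the sum (for `l ≠ k`), paired with the matching summand of
`u_k ∂_k A_k`, collapses to `(u_l - u_k)/(u_l - u_k) · [A_l, A_k] = [A_l, A_k]`, so the sum is
`-∑ₗ [A_k, A_l] = [A_k, A_∞]`. If `A_∞ = diag λ`, the `(j, i)` entry of `[A_k, diag λ]` is
`(λ_i - λ_j) (A_k)_{ji}`.
-/

open Matrix

attribute [local instance] Matrix.normedAddCommGroup Matrix.normedSpace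

theorem fderiv_sum_coord_smul_apply_single {𝕜 F ι : Type*} [NontriviallyNormedField 𝕜]
    [NormedAddCommGroup F] [NormedSpace 𝕜 F] [Fintype ι] [DecidableEq ι]
    {A : ι → (ι → 𝕜) → F} {u : ι → 𝕜} (hA : ∀ l, DifferentiableAt 𝕜 (A l) u) (k : ι) :
    fderiv 𝕜 (fun v => ∑ l, v l • A l v) u (Pi.single k 1)
      = A k u + ∑ l, u l • fderiv 𝕜 (A l) u (Pi.single k 1) := by
  rw [fderiv_fun_sum fun l _ => (differentiableAt_apply l u).fun_smul (hA l), _root_.sum_apply]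
  have hterm : ∀ l, fderiv 𝕜 (fun v => v l • A l v) u (Pi.single k 1)
      = u l • fderiv 𝕜 (A l) u (Pi.single k 1) + (Pi.single k 1 : ι → 𝕜) l • A l u := by
    intro l
    simp [fderiv_fun_smul (differentiableAt_apply l u) (hA l), (hasFDerivAt_apply l u).fderiv]
  simp [hterm, Finset.sum_add_distrib, Pi.single_apply, add_comm]

theorem smul_inv_sub_smul_neg_sub_smul_inv_sub_smul {𝕜 M : Type*} [Field 𝕜] [AddCommGroup M]
    [Module 𝕜 M] {a b : 𝕜} (hab : a ≠ b) (c : M) :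
    a • (a - b)⁻¹ • (-c) - b • (b - a)⁻¹ • c = -c := by
  have hs : -(a * (a - b)⁻¹) - b * (b - a)⁻¹ = -1 := by
    have : a - b ≠ 0 := sub_ne_zero.mpr hab
    have : b - a ≠ 0 := sub_ne_zero.mpr hab.symm
    field_simp
    ring
  linear_combination (norm := module) hs • c

/-- `D l` stands for `∂_k A_l` as given by the Schlesinger equations. -/
theorem sum_smul_eq_commutator_of_schlesinger {𝕜 R ι : Type*} [Field 𝕜] [Ring R] [Module 𝕜 R]
    [Fintype ι] [DecidableEq ι] {u : ι → 𝕜} {A D : ι → R} {k : ι}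
    (hu : ∀ l, l ≠ k → u l ≠ u k)
    (hoff : ∀ l, l ≠ k → D l = (u l - u k)⁻¹ • (A l * A k - A k * A l))
    (hdiag : D k = -∑ l ∈ Finset.univ.erase k, (u k - u l)⁻¹ • (A k * A l - A l * A k)) :
    ∑ l, u l • D l = A k * -(∑ l, A l) - (-(∑ l, A l)) * A k := by
  have hpair : ∀ l ∈ Finset.univ.erase k,
      u l • D l - u k • (u k - u l)⁻¹ • (A k * A l - A l * A k) = -(A k * A l - A l * A k) := by
    intro l hl
    have hlk := Finset.ne_of_mem_erase hl
    rw [hoff l hlk, ← neg_sub (A k * A l)]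
    exact smul_inv_sub_smul_neg_sub_smul_inv_sub_smul (hu l hlk) _
  calc ∑ l, u l • D l
      = ∑ l ∈ Finset.univ.erase k,
          (u l • D l - u k • (u k - u l)⁻¹ • (A k * A l - A l * A k)) := by
        rw [← Finset.add_sum_erase _ _ (Finset.mem_univ k), hdiag, smul_neg, Finset.smul_sum,
          Finset.sum_sub_distrib, neg_add_eq_sub]
    _ = -∑ l, (A k * A l - A l * A k) := by
        rw [Finset.sum_congr rfl hpair, Finset.sum_neg_distrib, Finset.sum_erase _ (by simp)]
    _ = A k * -(∑ l, A l) - (-(∑ l, A l)) * A k := by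
        rw [Finset.sum_sub_distrib, ← Finset.mul_sum, ← Finset.sum_mul]
        noncomm_ring

theorem add_commutator_diagonal_apply {R n : Type*} [CommRing R] [Fintype n] [DecidableEq n]
    (X : Matrix n n R) (d : n → R) (i j : n) :
    (X + (X * diagonal d - diagonal d * X)) j i = (1 + d i - d j) * X j i := by
  simp only [Matrix.add_apply, Matrix.sub_apply, mul_diagonal, diagonal_mul]
  ring

/-- Along solutions of the Schlesinger equations,
`∂/∂u_k (∑ₗ uₗ Aₗ) = A_k + [A_k, A_∞]`; in particular, if `A_∞ ≡ diag(λ_1,…,λ_m)` then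
`∂/∂u_k ∑ₗ uₗ (Aₗ)_{ji} = (1 + λ_i − λ_j) (A_k)_{ji}`. -/
theorem stmt_6 (n m : ℕ) (U : Set (Fin n → ℂ)) (hU : IsOpen U)
    (hUdist : ∀ u ∈ U, ∀ i j : Fin n, i ≠ j → u i ≠ u j)
    (A : Fin n → (Fin n → ℂ) → Matrix (Fin m) (Fin m) ℂ)
    (hdiff : ∀ i, DifferentiableOn ℂ (A i) U)
    (hSch_off : ∀ u ∈ U, ∀ i j : Fin n, i ≠ j →
      fderiv ℂ (A i) u (Pi.single j 1)
        = (u i - u j)⁻¹ • (A i u * A j u - A j u * A i u))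
    (hSch_diag : ∀ u ∈ U, ∀ i : Fin n,
      fderiv ℂ (A i) u (Pi.single i 1)
        = -∑ j ∈ Finset.univ.erase i,
            (u i - u j)⁻¹ • (A i u * A j u - A j u * A i u))
    (lam : Fin m → ℂ) :
    ∀ k : Fin n, ∀ u ∈ U,
      (fderiv ℂ (fun v => ∑ l, v l • A l v) u (Pi.single k 1)
        = A k u + (A k u * (-(∑ p, A p u)) - (-(∑ p, A p u)) * A k u)) ∧
      ((∀ v ∈ U, -(∑ p, A p v) = Matrix.diagonal lam) →
        ∀ i j : Fin m,
          fderiv ℂ (fun v => ∑ l, v l • A l v) u (Pi.single k 1) j i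
            = (1 + lam i - lam j) * A k u j i) := by
  intro k u hu
  have hderiv : fderiv ℂ (fun v => ∑ l, v l • A l v) u (Pi.single k 1)
      = A k u + (A k u * (-(∑ p, A p u)) - (-(∑ p, A p u)) * A k u) := by
    refine (fderiv_sum_coord_smul_apply_single
      (fun l => (hdiff l u hu).differentiableAt (hU.mem_nhds hu)) k).trans ?_
    congr 1
    exact sum_smul_eq_commutator_of_schlesinger (fun l hl => hUdist u hu l k hl)
      (fun l hl => hSch_off u hu l k hl) (hSch_diag u hu k)
  refine ⟨hderiv, fun hA_inf i j => ?_⟩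
  rw [hderiv, hA_inf u hu]
  exact add_commutator_diagonal_apply _ _ i j
end

section
/- Let A be an m×m complex matrix with m pairwise distinct eigenvalues, with characteristic polynomial det(w·I − A) = w^m + α_1 w^{m−1} + ⋯ + α_m. Let μ be an eigenvalue of A whose eigenvector ψ (Aψ = μψ, ψ ≠ 0) has vanishing first component: e_1ᵀ ψ = 0. Define the row vector v = (v_1,…,v_m) by v_k := μ^{m−k} + α_1 μ^{m−k−1} + ⋯ + α_{m−k}, and let B be the m×m matrix whose k-th row is e_1ᵀ A^{k−1}, k = 1,…,m. Then v · B = 0, i.e. v is a left null vector of B. -/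
open Matrix Polynomial


lemma aux_eval_charpoly {n : Type*} [Fintype n] [DecidableEq n]
    (A : Matrix n n ℂ) (c : ℂ) :
    Polynomial.eval c A.charpoly = (c • (1 : Matrix n n ℂ) - A).det := by
  rw [Matrix.charpoly, ← Polynomial.coe_evalRingHom, RingHom.map_det]
  congr 1
  ext i j
  by_cases h : i = j <;>
    simp [charmatrix_apply_eq, charmatrix_apply_ne, h, Matrix.one_apply,
      Matrix.smul_apply, Matrix.sub_apply]

lemma aux_first_zero (m : ℕ) (hm : 0 < m) (A : Matrix (Fin m) (Fin m) ℂ)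
    (lam : Fin m → ℂ) (hinj : Function.Injective lam)
    (hchar : A.charpoly = ∏ i, (X - C (lam i)))
    (μ : ℂ) (ψ : Fin m → ℂ) (hψ : ψ ≠ 0) (heig : A.mulVec ψ = μ • ψ)
    (hfirst : ψ ⟨0, hm⟩ = 0)
    (u : Fin m → ℂ) (hu : A.mulVec u = μ • u) : u ⟨0, hm⟩ = 0 := by
  classical
  by_contra h0
  -- μ is a root of the charpoly
  have hdet : (μ • (1 : Matrix (Fin m) (Fin m) ℂ) - A).det = 0 := by
    rw [← Matrix.exists_mulVec_eq_zero_iff]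
    refine ⟨ψ, hψ, ?_⟩
    rw [Matrix.sub_mulVec, Matrix.smul_mulVec, Matrix.one_mulVec, heig, sub_self]
  have hroot : Polynomial.eval μ A.charpoly = 0 := by
    rw [aux_eval_charpoly]; exact hdet
  obtain ⟨i0, -, hi0⟩ : ∃ i0 ∈ Finset.univ, lam i0 = μ := by
    rw [hchar, Polynomial.eval_prod] at hroot
    obtain ⟨i0, hmem, h⟩ := Finset.prod_eq_zero_iff.mp hroot
    exact ⟨i0, hmem, by simpa [sub_eq_zero, eq_comm] using h⟩
  -- eigenvectors for every eigenvalue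
  have hex : ∀ i : Fin m, ∃ x : Fin m → ℂ, x ≠ 0 ∧ A.mulVec x = lam i • x := by
    intro i
    have hrooti : Polynomial.eval (lam i) A.charpoly = 0 := by
      rw [hchar, Polynomial.eval_prod]
      exact Finset.prod_eq_zero (Finset.mem_univ i) (by simp)
    have hdeti : (lam i • (1 : Matrix (Fin m) (Fin m) ℂ) - A).det = 0 := by
      rw [← aux_eval_charpoly]; exact hrooti
    obtain ⟨x, hx0, hx⟩ := Matrix.exists_mulVec_eq_zero_iff.mpr hdeti
    refine ⟨x, hx0, ?_⟩
    rw [Matrix.sub_mulVec, Matrix.smul_mulVec, Matrix.one_mulVec, sub_eq_zero] at hx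
    exact hx.symm
  choose wv hw0 hweig using hex
  set f : Module.End ℂ (Fin m → ℂ) := Matrix.mulVecLin A with hf
  have hfapp : ∀ x : Fin m → ℂ, f x = A.mulVec x := fun x => rfl
  have hψE : ψ ∈ f.eigenspace μ := Module.End.mem_eigenspace_iff.mpr (by rw [hfapp, heig])
  have huE : u ∈ f.eigenspace μ := Module.End.mem_eigenspace_iff.mpr (by rw [hfapp, hu])
  -- ψ and u are linearly independent
  have hpair : LinearIndependent ℂ ![ψ, u] := by
    rw [LinearIndependent.pair_iff]
    intro s t hst
    have h1 : s * ψ ⟨0, hm⟩ + t * u ⟨0, hm⟩ = 0 := congrFun hst ⟨0, hm⟩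
    rw [hfirst, mul_zero, zero_add] at h1
    have ht : t = 0 := by
      rcases mul_eq_zero.mp h1 with h | h
      · exact h
      · exact absurd h h0
    subst ht
    rw [zero_smul, add_zero] at hst
    exact ⟨smul_eq_zero.mp hst |>.resolve_right hψ, rfl⟩
  set E : Submodule ℂ (Fin m → ℂ) := f.eigenspace μ with hE
  have hEge : 2 ≤ Module.finrank ℂ E := by
    have hle : Submodule.span ℂ (Set.range ![ψ, u]) ≤ E := by
      rw [Submodule.span_le]
      rintro x ⟨i, rfl⟩
      fin_cases i
      · exact hψE
      · exact huE
    calc 2 = Module.finrank ℂ (Submodule.span ℂ (Set.range ![ψ, u])) := by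
            rw [finrank_span_eq_card hpair]; simp
      _ ≤ Module.finrank ℂ E := Submodule.finrank_mono hle
  -- span of other eigenvectors
  have hLI : LinearIndependent ℂ (fun i : {i : Fin m // i ≠ i0} => wv i.1) := by
    refine Module.End.eigenvectors_linearIndependent' f
      (fun i : {i : Fin m // i ≠ i0} => lam i.1)
      (hinj.comp Subtype.coe_injective) _ (fun i => ⟨?_, hw0 i.1⟩)
    exact Module.End.mem_eigenspace_iff.mpr (by rw [hfapp, hweig])
  set F : Submodule ℂ (Fin m → ℂ) :=
    Submodule.span ℂ (Set.range fun i : {i : Fin m // i ≠ i0} => wv i.1) with hF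
  have hFrank : Module.finrank ℂ F = m - 1 := by
    rw [hF, finrank_span_eq_card hLI]
    rw [Fintype.card_subtype_compl, Fintype.card_subtype_eq, Fintype.card_fin]
  have hdisj : Disjoint E F := by
    have h := (Module.End.eigenspaces_iSupIndep f).disjoint_biSup
      (x := μ) (y := {c : ℂ | c ≠ μ}) (by simp)
    refine h.mono_right ?_
    rw [hF, Submodule.span_le]
    rintro x ⟨i, rfl⟩
    have hmem : wv i.1 ∈ f.eigenspace (lam i.1) :=
      Module.End.mem_eigenspace_iff.mpr (by rw [hfapp, hweig])
    have hne : lam i.1 ≠ μ := fun h => i.2 (hinj (h.trans hi0.symm))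
    exact Submodule.mem_iSup_of_mem (lam i.1)
      (Submodule.mem_iSup_of_mem hne hmem)
  have hsum := Submodule.finrank_sup_add_finrank_inf_eq E F
  rw [disjoint_iff.mp hdisj, finrank_bot, add_zero] at hsum
  have hle2 : Module.finrank ℂ ↥(E ⊔ F) ≤ m := by
    have := Submodule.finrank_le (E ⊔ F)
    rwa [Module.finrank_fin_fun] at this
  omega

lemma aux_horner (m : ℕ) (hm : 0 < m) (α : ℕ → ℂ) (μ : ℂ)
    (hp0 : μ ^ m + ∑ i ∈ Finset.range m, α (i + 1) * μ ^ (m - 1 - i) = 0) :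
    (X - C μ) * (∑ k ∈ Finset.range m,
        C (∑ i ∈ Finset.range (m - k), (if i = 0 then 1 else α i) * μ ^ (m - 1 - k - i)) * X ^ k)
      = X ^ m + ∑ i ∈ Finset.range m, C (α (i + 1)) * X ^ (m - 1 - i) := by
  classical
  set β : ℕ → ℂ := fun i => if i = 0 then 1 else α i with hβ
  set w : ℕ → ℂ := fun k => ∑ i ∈ Finset.range (m - k), β i * μ ^ (m - 1 - k - i) with hw
  have hwm : w m = 0 := by simp [hw]
  have hwrec : ∀ k, k < m → w k = μ * w (k + 1) + β (m - 1 - k) := by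
    intro k hk
    have h1 : m - k = (m - k - 1) + 1 := by omega
    rw [hw]
    simp only
    rw [h1, Finset.sum_range_succ]
    have h2 : m - 1 - k - (m - k - 1) = 0 := by omega
    rw [h2, pow_zero, mul_one]
    have h3 : m - k - 1 = m - (k+1) := by omega
    have h4 : m - k - 1 = m - 1 - k := by omega
    rw [Finset.mul_sum]
    congr 1
    · rw [← h3]
      apply Finset.sum_congr rfl
      intro i hi
      have hi' : i < m - k - 1 := Finset.mem_range.mp hi
      have h5 : m - 1 - k - i = (m - 1 - (k+1) - i) + 1 := by omega
      rw [h5, pow_succ]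
      ring
    · rw [h4]
  -- μ * w 0 = -(α m)
  have hμw0 : μ * w 0 = -(α m) := by
    have e1 : μ * w 0 = ∑ i ∈ Finset.range m, β i * μ ^ (m - i) := by
      rw [hw]
      simp only [Nat.sub_zero]
      rw [Finset.mul_sum]
      apply Finset.sum_congr rfl
      intro i hi
      have hi' : i < m := Finset.mem_range.mp hi
      have h5 : m - i = (m - 1 - i) + 1 := by omega
      rw [h5, pow_succ]
      ring
    have h6 : m = (m - 1) + 1 := by omega
    have e2 : ∑ i ∈ Finset.range m, β i * μ ^ (m - i)
        = (∑ i ∈ Finset.range (m-1), α (i+1) * μ ^ (m - 1 - i)) + μ ^ m := by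
      rw [h6, Finset.sum_range_succ']
      congr 1
      · apply Finset.sum_congr rfl
        intro i hi
        have : m - 1 + 1 - (i+1) = m - 1 - i := by omega
        simp [hβ, this]
      · simp [hβ]
    have e3 : ∑ i ∈ Finset.range m, α (i + 1) * μ ^ (m - 1 - i)
        = (∑ i ∈ Finset.range (m-1), α (i+1) * μ ^ (m - 1 - i)) + α m := by
      conv_lhs => rw [h6, Finset.sum_range_succ]
      have h62 : m - 1 + 1 = m := by omega
      rw [h62, Nat.sub_self, pow_zero, mul_one]
    rw [e1, e2]
    rw [e3] at hp0
    linear_combination hp0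
  have rhs : X ^ m + ∑ i ∈ Finset.range m, C (α (i + 1)) * X ^ (m - 1 - i)
      = ∑ k ∈ Finset.range (m+1), C (if k = m then 1 else α (m - k)) * X ^ k := by
    rw [Finset.sum_range_succ]
    have h63 : (if m = m then (1:ℂ) else α (m-m)) = 1 := if_pos rfl
    rw [h63, Polynomial.C_1, one_mul, add_comm]
    congr 1
    rw [← Finset.sum_range_reflect]
    apply Finset.sum_congr rfl
    intro i hi
    have hi' : i < m := Finset.mem_range.mp hi
    have ha : m - 1 - i + 1 = m - i := by omega
    have hb : m - 1 - (m - 1 - i) = i := by omega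
    have hc : ¬ (i = m) := by omega
    rw [ha, hb, if_neg hc]
  have step1 : X * (∑ k ∈ Finset.range m, C (w k) * X ^ k)
      = ∑ k ∈ Finset.range m, C (w k) * X ^ (k+1) := by
    rw [Finset.mul_sum]
    apply Finset.sum_congr rfl
    intro k hk
    rw [pow_succ]; ring
  have step2 : C μ * (∑ k ∈ Finset.range m, C (w k) * X ^ k)
      = ∑ k ∈ Finset.range m, C (μ * w k) * X ^ k := by
    rw [Finset.mul_sum]
    apply Finset.sum_congr rfl
    intro k hk
    rw [Polynomial.C_mul, mul_assoc]
  have step3 : ∑ k ∈ Finset.range (m+1), C (μ * w k) * X ^ k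
      = ∑ k ∈ Finset.range m, C (μ * w k) * X ^ k := by
    rw [Finset.sum_range_succ, hwm, mul_zero, Polynomial.C_0, zero_mul, add_zero]
  have key : ∑ k ∈ Finset.range (m+1),
        (C (if k = m then 1 else α (m - k)) * X ^ k + C (μ * w k) * X ^ k)
      = ∑ k ∈ Finset.range m, C (w k) * X ^ (k+1) := by
    rw [Finset.sum_range_succ']
    have hz : (if 0 = m then (1:ℂ) else α (m - 0)) = α m := by
      rw [if_neg (by omega : ¬ (0 = m)), Nat.sub_zero]
    rw [hz]
    have hlast : C (α m) * X ^ 0 + C (μ * w 0) * X ^ 0 = 0 := by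
      rw [pow_zero, mul_one, mul_one, ← Polynomial.C_add, hμw0, add_neg_cancel,
        Polynomial.C_0]
    rw [hlast, add_zero]
    apply Finset.sum_congr rfl
    intro k hk
    have hk' : k < m := Finset.mem_range.mp hk
    have h12 : (if k + 1 = m then (1:ℂ) else α (m - (k+1))) = β (m - 1 - k) := by
      rw [hβ]
      simp only
      by_cases h13 : k + 1 = m
      · rw [if_pos h13, if_pos (by omega)]
      · rw [if_neg h13, if_neg (by omega)]
        congr 1; omega
    rw [h12, ← add_mul, ← Polynomial.C_add, add_comm (β (m-1-k)), ← hwrec k hk']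
  rw [rhs, sub_mul, step1, step2]
  rw [Finset.sum_add_distrib] at key
  linear_combination step3 - key

/-- If `A` has `m` pairwise distinct eigenvalues and `μ` is an eigenvalue whose eigenvector has
vanishing first component, then the Horner row vector `v` built from `μ` and the characteristic
polynomial coefficients of `A` is a left null vector of the matrix `B` with rows `e₁ᵀ A^{k−1}`. -/
theorem stmt_14 (m : ℕ) (hm : 0 < m) (A : Matrix (Fin m) (Fin m) ℂ)
    (lam : Fin m → ℂ) (hinj : Function.Injective lam)
    (hchar : A.charpoly = ∏ i, (X - C (lam i)))
    (α : ℕ → ℂ)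
    (hα : A.charpoly
      = X ^ m + ∑ i ∈ Finset.range m, C (α (i + 1)) * X ^ (m - 1 - i))
    (μ : ℂ) (ψ : Fin m → ℂ) (hψ : ψ ≠ 0) (heig : A.mulVec ψ = μ • ψ)
    (hfirst : ψ ⟨0, hm⟩ = 0)
    (v : Fin m → ℂ)
    (hv : ∀ k : Fin m, v k = ∑ i ∈ Finset.range (m - (k : ℕ)),
      (if i = 0 then 1 else α i) * μ ^ (m - 1 - (k : ℕ) - i))
    (B : Matrix (Fin m) (Fin m) ℂ)
    (hB : B = Matrix.of fun k j : Fin m => (A ^ (k : ℕ)) ⟨0, hm⟩ j) :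
    Matrix.vecMul v B = 0 := by
  classical
  set β : ℕ → ℂ := fun i => if i = 0 then 1 else α i with hβ
  set w : ℕ → ℂ := fun k => ∑ i ∈ Finset.range (m - k), β i * μ ^ (m - 1 - k - i) with hw
  -- eval μ charpoly = 0
  have hdet : (μ • (1 : Matrix (Fin m) (Fin m) ℂ) - A).det = 0 := by
    rw [← Matrix.exists_mulVec_eq_zero_iff]
    refine ⟨ψ, hψ, ?_⟩
    rw [Matrix.sub_mulVec, Matrix.smul_mulVec, Matrix.one_mulVec, heig, sub_self]
  have hroot : Polynomial.eval μ A.charpoly = 0 := by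
    rw [aux_eval_charpoly]; exact hdet
  have hp0 : μ ^ m + ∑ i ∈ Finset.range m, α (i + 1) * μ ^ (m - 1 - i) = 0 := by
    rw [hα] at hroot
    simpa [Polynomial.eval_finset_sum] using hroot
  -- the Horner quotient identity
  have key : (X - C μ) * (∑ k ∈ Finset.range m, C (w k) * X ^ k) = A.charpoly := by
    rw [hα]
    exact aux_horner m hm α μ hp0
  -- apply Cayley–Hamilton
  have hN : (A - μ • (1 : Matrix (Fin m) (Fin m) ℂ))
      * (∑ k ∈ Finset.range m, w k • A ^ k) = 0 := by
    have h1 := congrArg (Polynomial.aeval A) key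
    rw [Matrix.aeval_self_charpoly] at h1
    rw [_root_.map_mul, _root_.map_sub, Polynomial.aeval_X, Polynomial.aeval_C, _root_.map_sum] at h1
    have h2 : ∀ k, Polynomial.aeval A (C (w k) * X ^ k) = w k • A ^ k := by
      intro k
      rw [_root_.map_mul, Polynomial.aeval_C, map_pow, Polynomial.aeval_X,
        Algebra.algebraMap_eq_smul_one, smul_mul_assoc, one_mul]
    rw [Finset.sum_congr rfl (fun k _ => h2 k), Algebra.algebraMap_eq_smul_one] at h1
    exact h1
  set N : Matrix (Fin m) (Fin m) ℂ := ∑ k ∈ Finset.range m, w k • A ^ k with hNdef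
  have hAN : A * N = μ • N := by
    rw [sub_mul, sub_eq_zero] at hN
    rw [hN, smul_mul_assoc, one_mul]
  have hcol : ∀ j, A.mulVec (fun i => N i j) = μ • (fun i => N i j) := by
    intro j
    funext i
    have := congrFun (congrFun hAN i) j
    rw [Matrix.mul_apply] at this
    simpa [Matrix.mulVec, dotProduct] using this
  have hNrow : ∀ j, N ⟨0, hm⟩ j = 0 := fun j =>
    aux_first_zero m hm A lam hinj hchar μ ψ hψ heig hfirst _ (hcol j)
  funext j
  have hval : Matrix.vecMul v B j = ∑ k : Fin m, w (k : ℕ) * (A ^ (k : ℕ)) ⟨0, hm⟩ j := by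
    rw [hB]
    simp only [Matrix.vecMul, dotProduct, Matrix.of_apply]
    apply Finset.sum_congr rfl
    intro k _
    rw [hv k]
  rw [hval]
  have hNentry : N ⟨0, hm⟩ j = ∑ k ∈ Finset.range m, w k * (A ^ k) ⟨0, hm⟩ j := by
    rw [hNdef]
    rw [Matrix.sum_apply]
    apply Finset.sum_congr rfl
    intro k _
    simp
  have := hNrow j
  rw [hNentry] at this
  rw [Pi.zero_apply, ← this, Fin.sum_univ_eq_sum_range (fun k => w k * (A ^ k) ⟨0, hm⟩ j) m]
end

section
/- Let A be an m×m matrix over a field, with characteristic polynomial det(w·I − A) = w^m + α_1 w^{m−1} + ⋯ + α_m, and let B be the m×m matrix whose k-th row is e_1ᵀ A^{k−1}, k = 1,…,m. If B is invertible, then (e_1ᵀ A^m) · B^{−1} = −(α_m, α_{m−1}, …, α_1). -/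
open Matrix Polynomial

/-- If `B` (the matrix with rows `e₁ᵀ A^{k−1}`) is invertible, then
`(e₁ᵀ A^m)·B⁻¹ = −(α_m, α_{m−1}, …, α_1)`, the reversed coefficient vector of the
characteristic polynomial of `A`. -/
theorem stmt_15 (K : Type*) [Field K] (m : ℕ) (hm : 0 < m)
    (A : Matrix (Fin m) (Fin m) K) (α : ℕ → K)
    (hα : A.charpoly
      = X ^ m + ∑ i ∈ Finset.range m, C (α (i + 1)) * X ^ (m - 1 - i))
    (B : Matrix (Fin m) (Fin m) K)
    (hB : B = Matrix.of fun k j : Fin m => (A ^ (k : ℕ)) ⟨0, hm⟩ j)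
    (hBunit : IsUnit B.det) :
    Matrix.vecMul (fun j => (A ^ m) ⟨0, hm⟩ j) B⁻¹
      = fun j : Fin m => -α (m - (j : ℕ)) := by
  have hCH := Matrix.aeval_self_charpoly A
  rw [hα] at hCH
  simp only [map_add, map_sum, _root_.map_mul, map_pow, aeval_X, aeval_C,
    ← Algebra.smul_def] at hCH
  have key : (fun j => (A ^ m) ⟨0, hm⟩ j)
      = Matrix.vecMul (fun j : Fin m => -α (m - (j : ℕ))) B := by
    funext j
    have h1 : (A ^ m) ⟨0, hm⟩ j
        + ∑ i ∈ Finset.range m, α (i + 1) * (A ^ (m - 1 - i)) ⟨0, hm⟩ j = 0 := by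
      have h2 := congrFun (congrFun hCH ⟨0, hm⟩) j
      simpa [Matrix.add_apply, Matrix.sum_apply, Matrix.smul_apply,
        smul_eq_mul] using h2
    have h0 : (A ^ m) ⟨0, hm⟩ j
        = -(∑ i ∈ Finset.range m,
            α (i + 1) * (A ^ (m - 1 - i)) ⟨0, hm⟩ j) :=
      eq_neg_of_add_eq_zero_left h1
    rw [h0, Matrix.vecMul, hB]
    simp only [dotProduct, Matrix.of_apply]
    rw [Fin.sum_univ_eq_sum_range (fun k => -α (m - k) * (A ^ k) ⟨0, hm⟩ j) m]
    rw [← Finset.sum_range_reflect (fun k => -α (m - k) * (A ^ k) ⟨0, hm⟩ j) m]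
    rw [← Finset.sum_neg_distrib]
    apply Finset.sum_congr rfl
    intro i hi
    have hi' : i < m := Finset.mem_range.mp hi
    have hidx : m - (m - 1 - i) = i + 1 := by omega
    rw [hidx]
    ring
  rw [key, Matrix.vecMul_vecMul, Matrix.mul_nonsing_inv B hBunit, Matrix.vecMul_one]
end

section
/- Let U ⊆ ℂ be open, let A : U → M_m(ℂ) be analytic, and let z_0 ∈ U. Define row-vector-valued functions b_k(z) := e_1ᵀ A(z)^k for k ≥ 0, set b̃_0 := 0 and b̃_{k+1}(z) := b̃_k(z)·A(z) + b_k′(z), and let B(z), B̃(z) be the m×m matrices whose rows are b_0,…,b_{m−1} and b̃_0,…,b̃_{m−1} respectively. Let α_1(z),…,α_m(z) be the coefficients of the characteristic polynomial det(w·I − A(z)) = w^m + α_1(z) w^{m−1} + ⋯ + α_m(z) and let T(z) be the companion matrix with T_{i,i+1} = 1 for i < m and last row (−α_m(z),…,−α_1(z)). If B(z_0) is invertible, then at z = z_0: b̃_m B^{−1} − b_m B^{−1} B̃ B^{−1} = ∑_{k=1}^m e_kᵀ · B′ B^{−1} · ( T^{m−k} + α_1 T^{m−k−1} + ⋯ +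 α_{m−k}·I ). -/
/-!
Write `B` for the Krylov matrix with rows `e₁ᵀAᵏ` (`k < m`) and `T` for the companion matrix of
`charpoly A`. Cayley–Hamilton gives `T B = B A`, hence `Aⁿ B⁻¹ = B⁻¹ Tⁿ`, and it also expresses
`b_m` through the rows of `B`, which turns the left-hand side into `∑_{l ≤ m} c_l b̃_l B⁻¹`, where
`c_l` are the coefficients of `charpoly A` (`c_m = 1`). Unrolling the recursion,
`b̃_l = ∑_{j < l} b_j′ A^{l-1-j}`, so the left-hand side is
`∑_{l ≤ m} ∑_{j < l} c_l b_j′ B⁻¹ T^{l-1-j}`; exchanging the two sums and substituting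
`l = m - i` gives the right-hand side, with `α_i = c_{m-i}`.
-/

open Matrix

attribute [local instance] Matrix.normedAddCommGroup Matrix.normedSpace

open Finset Polynomial

theorem Finset.sum_range_succ_sum_range_eq_sum_range_sum_range_sub {M : Type*}
    [AddCommMonoid M] (m : ℕ) (g : ℕ → ℕ → M) :
    ∑ l ∈ range (m + 1), ∑ j ∈ range l, g l j
      = ∑ k ∈ range m, ∑ i ∈ range (m - k), g (m - i) k := by
  simp only [range_eq_Ico]
  rw [← sum_Ico_Ico_comm' 0 (m + 1) fun j l => g l j, sum_Ico_succ_top (Nat.zero_le m),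
    Ico_self, sum_empty, add_zero]
  refine sum_congr rfl fun k _ => ?_
  rw [sum_Ico_eq_sum_range, ← range_eq_Ico, ← sum_range_reflect]
  refine sum_congr (by congr 1; omega) fun i hi => ?_
  have := mem_range.1 hi
  congr 1
  omega

theorem differentiableAt_matrix_pow_apply {𝕜 𝔸 n : Type*} [NontriviallyNormedField 𝕜]
    [NormedRing 𝔸] [NormedAlgebra 𝕜 𝔸] [Fintype n] [DecidableEq n] {A : 𝕜 → Matrix n n 𝔸}
    {z : 𝕜} (hA : ∀ i j, DifferentiableAt 𝕜 (fun w => A w i j) z) (k : ℕ) (i j : n) :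
    DifferentiableAt 𝕜 (fun w => (A w ^ k) i j) z := by
  induction k generalizing j with
  | zero => simp only [pow_zero, one_apply]; exact differentiableAt_const _
  | succ k ih =>
    simp only [pow_succ, mul_apply]
    exact DifferentiableAt.fun_sum fun l _ => (ih l).mul (hA l j)

namespace Matrix

theorem eq_sum_vecMul_pow_of_eq_vecMul_add {S n : Type*} [Semiring S] [Fintype n]
    [DecidableEq n] {M : Matrix n n S} {x y : ℕ → n → S} (h0 : x 0 = 0)
    (hs : ∀ k, x (k + 1) = x k ᵥ* M + y k) (k : ℕ) :
    x k = ∑ j ∈ range k, y j ᵥ* M ^ (k - 1 - j) := by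
  induction k with
  | zero => simp [h0]
  | succ k ih =>
    rw [hs, ih, sum_vecMul, sum_range_succ, Nat.add_sub_cancel, Nat.sub_self, pow_zero,
      vecMul_one]
    congr 1
    refine sum_congr rfl fun j hj => ?_
    rw [vecMul_vecMul, ← pow_succ]
    congr 2
    have := mem_range.1 hj
    omega

variable {R : Type*} [CommRing R]

section Square

variable {n : Type*} [Fintype n] [DecidableEq n]

theorem charpoly_coeff_card [Nontrivial R] (M : Matrix n n R) :
    M.charpoly.coeff (Fintype.card n) = 1 := by
  simpa [charpoly_natDegree_eq_dim] using M.charpoly_monic.coeff_natDegree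

theorem pow_card_eq_neg_sum_charpoly_coeff_smul_pow [Nontrivial R] (M : Matrix n n R) :
    M ^ Fintype.card n = -∑ i ∈ range (Fintype.card n), M.charpoly.coeff i • M ^ i := by
  have h := M.aeval_self_charpoly
  rw [aeval_eq_sum_range, charpoly_natDegree_eq_dim, sum_range_succ, charpoly_coeff_card,
    one_smul] at h
  exact eq_neg_of_add_eq_zero_right h

theorem pow_mul_inv_eq_inv_mul_pow {A B T : Matrix n n R} (h : T * B = B * A)
    (hB : IsUnit B.det) (k : ℕ) : A ^ k * B⁻¹ = B⁻¹ * T ^ k := by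
  have hk : B * A ^ k = T ^ k * B := SemiconjBy.pow_right h.symm k
  calc A ^ k * B⁻¹ = B⁻¹ * (B * A ^ k) * B⁻¹ := by
        rw [← Matrix.mul_assoc, nonsing_inv_mul _ hB, Matrix.one_mul]
    _ = B⁻¹ * T ^ k := by
        rw [hk, Matrix.mul_assoc, Matrix.mul_assoc, mul_nonsing_inv _ hB, Matrix.mul_one]

theorem vecMul_vecMul_inv_mul_mul_inv {B : Matrix n n R} (hB : IsUnit B.det) (v : n → R)
    (C : Matrix n n R) : (v ᵥ* B) ᵥ* (B⁻¹ * C * B⁻¹) = (v ᵥ* C) ᵥ* B⁻¹ := by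
  rw [vecMul_vecMul, ← Matrix.mul_assoc, ← Matrix.mul_assoc, mul_nonsing_inv _ hB,
    Matrix.one_mul, vecMul_vecMul]

end Square

variable {m : ℕ}

def krylov (v : Fin m → R) (A : Matrix (Fin m) (Fin m) R) : Matrix (Fin m) (Fin m) R :=
  of fun k => v ᵥ* A ^ (k : ℕ)

def companion (p : R[X]) : Matrix (Fin m) (Fin m) R :=
  of fun i j => if (i : ℕ) + 1 = m then -p.coeff j else if (j : ℕ) = i + 1 then 1 else 0

theorem companion_charpoly_mul_krylov [Nontrivial R] (A : Matrix (Fin m) (Fin m) R)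
    (v : Fin m → R) : companion A.charpoly * krylov v A = krylov v A * A := by
  funext k
  change companion A.charpoly k ᵥ* krylov v A = v ᵥ* A ^ (k : ℕ) ᵥ* A
  rw [vecMul_vecMul, ← pow_succ]
  by_cases hk : (k : ℕ) + 1 = m
  · have hrow : companion A.charpoly k = -fun j : Fin m => A.charpoly.coeff j := by
      funext j; simp [companion, hk]
    have hCH := A.pow_card_eq_neg_sum_charpoly_coeff_smul_pow
    rw [Fintype.card_fin] at hCH
    calc companion A.charpoly k ᵥ* krylov v A
        = -∑ l : Fin m, A.charpoly.coeff l • v ᵥ* A ^ (l : ℕ) := by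
          rw [hrow, neg_vecMul, vecMul_eq_sum]; rfl
      _ = v ᵥ* A ^ ((k : ℕ) + 1) := by
          simp only [hk, hCH, vecMul_neg, vecMul_sum, vecMul_smul,
            Fin.sum_univ_eq_sum_range fun i => A.charpoly.coeff i • v ᵥ* A ^ i]
  · have hlt : (k : ℕ) + 1 < m := by omega
    have hrow : companion A.charpoly k = Pi.single ⟨k + 1, hlt⟩ 1 := by
      funext j; simp [companion, hk, Pi.single_apply, Fin.ext_iff]
    rw [hrow, single_one_vecMul]
    rfl

section Krylov

variable [Nontrivial R] {A : Matrix (Fin m) (Fin m) R} {v : Fin m → R}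

theorem vecMul_krylov_inv_sub_eq_sum_charpoly_coeff_smul (hK : IsUnit (krylov v A).det)
    (x : ℕ → Fin m → R) :
    x m ᵥ* (krylov v A)⁻¹
      - (v ᵥ* A ^ m) ᵥ* ((krylov v A)⁻¹ * of (fun k : Fin m => x k) * (krylov v A)⁻¹)
    = ∑ l ∈ range (m + 1), A.charpoly.coeff l • (x l ᵥ* (krylov v A)⁻¹) := by
  have hrow : ∀ l : Fin m, v ᵥ* A ^ (l : ℕ) = Pi.single l 1 ᵥ* krylov v A := fun l => by
    rw [single_one_vecMul]; rfl
  have hCH := A.pow_card_eq_neg_sum_charpoly_coeff_smul_pow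
  have hc := A.charpoly_coeff_card
  rw [Fintype.card_fin] at hCH hc
  rw [hCH, vecMul_neg, neg_vecMul, sub_neg_eq_add, vecMul_sum, sum_vecMul,
    ← Fin.sum_univ_eq_sum_range, sum_range_succ, ← Fin.sum_univ_eq_sum_range, add_comm, hc,
    one_smul]
  congr 1
  refine sum_congr rfl fun l _ => ?_
  rw [vecMul_smul, smul_vecMul, hrow, vecMul_vecMul_inv_mul_mul_inv hK, single_one_vecMul]
  rfl

theorem vecMul_krylov_inv_sub_eq_sum_companion_pow (hK : IsUnit (krylov v A).det)
    {x y : ℕ → Fin m → R} (hx : ∀ k, x k = ∑ j ∈ range k, y j ᵥ* A ^ (k - 1 - j)) :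
    x m ᵥ* (krylov v A)⁻¹
      - (v ᵥ* A ^ m) ᵥ* ((krylov v A)⁻¹ * of (fun k : Fin m => x k) * (krylov v A)⁻¹)
    = ∑ k : Fin m, Pi.single k 1 ᵥ* (of (fun k : Fin m => y k) * (krylov v A)⁻¹ *
        ∑ i ∈ range (m - k),
          A.charpoly.coeff (m - i) • companion A.charpoly ^ (m - 1 - k - i)) := by
  rw [vecMul_krylov_inv_sub_eq_sum_charpoly_coeff_smul hK]
  set K := krylov v A
  set T : Matrix (Fin m) (Fin m) R := companion A.charpoly
  have hTK : T * K = K * A := companion_charpoly_mul_krylov A v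
  have hx' : ∀ l, x l ᵥ* K⁻¹ = ∑ j ∈ range l, y j ᵥ* (K⁻¹ * T ^ (l - 1 - j)) := fun l => by
    simp only [hx, sum_vecMul, vecMul_vecMul, pow_mul_inv_eq_inv_mul_pow hTK hK]
  have hrow : ∀ k : Fin m, Pi.single k 1 ᵥ* (of (fun k : Fin m => y k) * K⁻¹ *
        ∑ i ∈ range (m - k), A.charpoly.coeff (m - i) • T ^ (m - 1 - k - i))
      = ∑ i ∈ range (m - k), A.charpoly.coeff (m - i) • (y k ᵥ* (K⁻¹ * T ^ (m - 1 - k - i))) :=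
    fun k => by
      rw [← vecMul_vecMul, ← vecMul_vecMul, single_one_vecMul, vecMul_sum]
      simp only [vecMul_smul, vecMul_vecMul]
      rfl
  rw [sum_congr rfl fun k _ => hrow k,
    Fin.sum_univ_eq_sum_range fun k => ∑ i ∈ range (m - k),
      A.charpoly.coeff (m - i) • (y k ᵥ* (K⁻¹ * T ^ (m - 1 - k - i)))]
  simp only [hx', smul_sum]
  rw [sum_range_succ_sum_range_eq_sum_range_sum_range_sub]
  refine sum_congr rfl fun k _ => sum_congr rfl fun i _ => ?_
  rw [Nat.sub_right_comm _ i, Nat.sub_right_comm _ i]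

end Krylov

end Matrix

theorem stmt_16_general (m : ℕ) (hm : 0 < m) (U : Set ℂ)
    (A : ℂ → Matrix (Fin m) (Fin m) ℂ) (hA : AnalyticOnNhd ℂ A U)
    (b : ℕ → ℂ → Fin m → ℂ)
    (hb : ∀ k z, b k z = fun j => (A z ^ k) ⟨0, hm⟩ j)
    (btil : ℕ → ℂ → Fin m → ℂ)
    (hbt0 : ∀ z, btil 0 z = 0)
    (hbts : ∀ k z, btil (k + 1) z = Matrix.vecMul (btil k z) (A z) + deriv (b k) z)
    (B Btil : ℂ → Matrix (Fin m) (Fin m) ℂ)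
    (hB : ∀ z, B z = Matrix.of fun k j : Fin m => b (k : ℕ) z j)
    (hBt : ∀ z, Btil z = Matrix.of fun k j : Fin m => btil (k : ℕ) z j)
    (α : ℕ → ℂ → ℂ) (hα : ∀ i z, α i z = (A z).charpoly.coeff (m - i))
    (T : ℂ → Matrix (Fin m) (Fin m) ℂ)
    (hT : ∀ z, T z = Matrix.of fun i j : Fin m =>
      if (i : ℕ) + 1 = m then -α (m - (j : ℕ)) z
      else if (j : ℕ) = (i : ℕ) + 1 then 1 else 0)
    (z₀ : ℂ) (hz₀ : z₀ ∈ U) (hdet : IsUnit (B z₀).det) :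
    Matrix.vecMul (btil m z₀) (B z₀)⁻¹
      - Matrix.vecMul (b m z₀) ((B z₀)⁻¹ * Btil z₀ * (B z₀)⁻¹)
    = ∑ k : Fin m, Matrix.vecMul (Pi.single k 1)
        ((Matrix.of fun i j : Fin m => deriv (fun w => B w i j) z₀) * (B z₀)⁻¹ *
          ∑ i ∈ Finset.range (m - (k : ℕ)),
            (if i = 0 then (1 : ℂ) else α i z₀) • T z₀ ^ (m - 1 - (k : ℕ) - i)) := by
  have hb₀ : ∀ k, b k z₀ = Pi.single ⟨0, hm⟩ 1 ᵥ* A z₀ ^ k := fun k => by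
    rw [hb, single_one_vecMul]; rfl
  have hB₀ : B z₀ = krylov (Pi.single ⟨0, hm⟩ 1) (A z₀) := by
    ext k j; rw [hB, of_apply, hb₀]; rfl
  have hT₀ : T z₀ = companion (A z₀).charpoly := by
    ext i j; simp [hT, companion, hα, Nat.sub_sub_self j.is_lt.le]
  have hB' : (of fun i j : Fin m => deriv (fun w => B w i j) z₀)
      = of fun k : Fin m => deriv (b k) z₀ := by
    have hAij : ∀ i j, DifferentiableAt ℂ (fun w => A w i j) z₀ := fun i =>
      differentiableAt_pi.1 (differentiableAt_pi.1 (hA z₀ hz₀).differentiableAt i)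
    ext k j
    have hbk : ∀ j, DifferentiableAt ℂ (fun w => b k w j) z₀ := fun j => by
      simp only [hb]; exact differentiableAt_matrix_pow_apply hAij k _ j
    simp only [of_apply, deriv_pi hbk, hB]
  have hbtil := eq_sum_vecMul_pow_of_eq_vecMul_add (x := fun k => btil k z₀)
    (y := fun k => deriv (b k) z₀) (hbt0 z₀) fun k => hbts k z₀
  rw [hB₀] at hdet
  rw [hb₀, hB', hBt, hT₀, hB₀]
  refine (vecMul_krylov_inv_sub_eq_sum_companion_pow hdet hbtil).trans
    (sum_congr rfl fun k _ => congrArg _ (congrArg _ (sum_congr rfl fun i _ =>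
      congrArg (· • _) ?_)))
  split_ifs with hi
  · simpa [hi] using (A z₀).charpoly_coeff_card
  · rw [hα]

/-- The first-order (in ε) term of the coefficients of the scalar reduction of the family
`ε dΦ/dz = A(z)Φ`: at a point `z₀` where `B(z₀)` is invertible,
`b̃_m B⁻¹ − b_m B⁻¹ B̃ B⁻¹ = ∑ₖ e_kᵀ B′B⁻¹ (T^{m−k} + α₁ T^{m−k−1} + ⋯ + α_{m−k} I)`. -/
theorem stmt_16 (m : ℕ) (hm : 0 < m) (U : Set ℂ) (hU : IsOpen U)
    (A : ℂ → Matrix (Fin m) (Fin m) ℂ) (hA : AnalyticOnNhd ℂ A U)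
    (b : ℕ → ℂ → Fin m → ℂ)
    (hb : ∀ k z, b k z = fun j => (A z ^ k) ⟨0, hm⟩ j)
    (btil : ℕ → ℂ → Fin m → ℂ)
    (hbt0 : ∀ z, btil 0 z = 0)
    (hbts : ∀ k z, btil (k + 1) z = Matrix.vecMul (btil k z) (A z) + deriv (b k) z)
    (B Btil : ℂ → Matrix (Fin m) (Fin m) ℂ)
    (hB : ∀ z, B z = Matrix.of fun k j : Fin m => b (k : ℕ) z j)
    (hBt : ∀ z, Btil z = Matrix.of fun k j : Fin m => btil (k : ℕ) z j)
    (α : ℕ → ℂ → ℂ) (hα : ∀ i z, α i z = (A z).charpoly.coeff (m - i))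
    (T : ℂ → Matrix (Fin m) (Fin m) ℂ)
    (hT : ∀ z, T z = Matrix.of fun i j : Fin m =>
      if (i : ℕ) + 1 = m then -α (m - (j : ℕ)) z
      else if (j : ℕ) = (i : ℕ) + 1 then 1 else 0)
    (z₀ : ℂ) (hz₀ : z₀ ∈ U) (hdet : IsUnit (B z₀).det) :
    Matrix.vecMul (btil m z₀) (B z₀)⁻¹
      - Matrix.vecMul (b m z₀) ((B z₀)⁻¹ * Btil z₀ * (B z₀)⁻¹)
    = ∑ k : Fin m, Matrix.vecMul (Pi.single k 1)
        ((Matrix.of fun i j : Fin m => deriv (fun w => B w i j) z₀) * (B z₀)⁻¹ *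
          ∑ i ∈ Finset.range (m - (k : ℕ)),
            (if i = 0 then (1 : ℂ) else α i z₀) • T z₀ ^ (m - 1 - (k : ℕ) - i)) :=
  stmt_16_general m hm U A hA b hb btil hbt0 hbts B Btil hB hBt α hα T hT z₀ hz₀ hdet
end

section
/- Let m ≥ 2, n ≥ 2 and set g := (n−1)·m(m−1)/2 − (m−1); assume g ≥ 1. Note that g = ∑_{k=2}^m ((k−1)(n−1) − 1), so the pairs (k, a) with 2 ≤ k ≤ m and 0 ≤ a ≤ (k−1)(n−1) − 2 number exactly g. Consider the g×g matrix M(γ, μ), depending on complex parameters γ_1,…,γ_g, μ_1,…,μ_g, whose rows are indexed by s ∈ {1,…,g}, whose columns are indexed by the pairs (k, a) above, and whose (s, (k,a)) entry is μ_s^{m−k} · γ_s^a. Then det M(γ, μ) is not identically zero: there exist complex values of γ_1,…,γ_g, μ_1,…,μ_g for which M(γ, μ) is invertible. -/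
/-!
Substituting `μ = γ ^ N`, with `N` larger than every exponent `a`, turns the entries into
`γ_s ^ (N (m - k) + a)` with pairwise distinct exponents: a generalized Vandermonde matrix.
Distinct monomials are linearly independent functions on the infinite field `ℂ`, and for any
linearly independent family of `g` functions the evaluation vectors span `F ^ g`, so `g` of them
form a basis; the corresponding evaluation points make the matrix nonsingular.
-/

open Matrix

theorem span_range_eval_eq_top {F α ι : Type*} [Field F] [Fintype ι] {f : ι → α → F}
    (hf : LinearIndependent F f) :
    Submodule.span F (Set.range fun a i => f i a) = ⊤ := by
  classical
  by_contra hne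
  -- a functional vanishing on every evaluation vector is a linear relation among the `f i`
  obtain ⟨φ, hφ, hker⟩ := Submodule.exists_dual_map_eq_bot_of_lt_top (lt_top_iff_ne_top.2 hne)
    inferInstance
  set w : ι → F := fun i => φ fun j => if i = j then 1 else 0
  have hw : ∑ i, w i • f i = 0 := by
    ext a
    have hmem : φ (fun i => f i a) ∈ (Submodule.span F (Set.range fun a i => f i a)).map φ :=
      Submodule.mem_map_of_mem (Submodule.subset_span ⟨a, rfl⟩)
    rw [hker, Submodule.mem_bot, LinearMap.pi_apply_eq_sum_univ] at hmem
    simpa [Finset.sum_apply, mul_comm] using hmem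
  have hw0 := Fintype.linearIndependent_iff.1 hf w hw
  exact hφ (LinearMap.ext fun x => by simp [LinearMap.pi_apply_eq_sum_univ φ x, w, hw0])

theorem exists_det_eval_ne_zero {F α ι : Type*} [Field F] [Fintype ι] [DecidableEq ι]
    {f : ι → α → F} (hf : LinearIndependent F f) :
    ∃ x : ι → α, (of fun i j => f j (x i)).det ≠ 0 := by
  let B := Module.Basis.ofSpan (span_range_eval_eq_top hf).ge
  let := FiniteDimensional.fintypeBasisIndex B
  let e : ι ≃ _ := Fintype.equivOfCardEq <| by
    rw [← Module.finrank_eq_card_basis B, Module.finrank_fintype_fun_eq_card]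
  choose x hx using fun i => Module.Basis.ofSpan_subset _ ⟨e i, rfl⟩
  refine ⟨x, ?_⟩
  rw [← isUnit_iff_ne_zero, ← isUnit_iff_isUnit_det, ← linearIndependent_rows_iff_isUnit,
    show (of fun i j => f j (x i)).row = B ∘ e from funext hx]
  exact B.linearIndependent.comp e e.injective

theorem linearIndependent_fun_pow {R ι : Type*} [CommRing R] [IsDomain R] [Infinite R]
    {e : ι → ℕ} (he : Function.Injective e) :
    LinearIndependent R fun i (z : R) => z ^ e i := by
  have hX : LinearIndependent R fun i => (Polynomial.X : Polynomial R) ^ e i := by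
    simpa only [Polynomial.X_pow_eq_monomial, Polynomial.coe_basisMonomials,
      Function.comp_def] using (Polynomial.basisMonomials R).linearIndependent.comp e he
  let eval : Polynomial R →ₗ[R] R → R := LinearMap.pi Polynomial.leval
  have heval : LinearMap.ker eval = ⊥ := LinearMap.ker_eq_bot'.2 fun p hp =>
    Polynomial.funext fun z => by simpa [eval] using congrFun hp z
  rw [show (fun i (z : R) => z ^ e i) = eval ∘ fun i => Polynomial.X ^ e i by
    ext i z; simp [eval]]
  exact hX.map' eval heval

theorem sum_range_succ_mul_sub_one_eq (m n : ℕ) :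
    ∑ k ∈ Finset.range (m - 1), ((k + 1) * (n - 1) - 1)
      = (n - 1) * (m * (m - 1) / 2) - (m - 1) := by
  rcases Nat.lt_or_ge n 2 with hn | hn
  · rw [show n - 1 = 0 by omega]
    simp
  have hsum : ∑ k ∈ Finset.range (m - 1), (k + 1) = m * (m - 1) / 2 := by
    rcases m with _ | m
    · simp
    · rw [← Finset.sum_range_id, Finset.sum_range_succ']
      simp
  have hpos (k : ℕ) : 1 ≤ (k + 1) * (n - 1) := Nat.mul_pos k.succ_pos (by omega)
  rw [Finset.sum_tsub_distrib _ fun k _ => hpos k, ← Finset.sum_mul, hsum]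
  simp [mul_comm]

theorem exists_det_pow_mul_pow_ne_zero {F ι : Type*} [Field F] [Infinite F] [Fintype ι]
    [DecidableEq ι] {p q : ι → ℕ} (hpq : Function.Injective fun i => (p i, q i)) :
    ∃ γ μ : ι → F, (of fun s c => μ s ^ p c * γ s ^ q c).det ≠ 0 := by
  obtain ⟨N, hN, hqN⟩ : ∃ N, 0 < N ∧ ∀ i, q i < N :=
    ⟨Finset.univ.sup q + 1, Nat.succ_pos _,
      fun i => Nat.lt_succ_of_le (Finset.le_sup (Finset.mem_univ i))⟩
  have he : Function.Injective fun i => N * p i + q i := fun i j h => hpq <| by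
    have hp : p i = p j := by
      simpa [Nat.mul_add_div hN, Nat.div_eq_of_lt (hqN _)] using congrArg (· / N) h
    have hq : q i = q j := by
      simpa [Nat.mul_add_mod, Nat.mod_eq_of_lt (hqN _)] using congrArg (· % N) h
    simp only [hp, hq]
  obtain ⟨γ, hγ⟩ := exists_det_eval_ne_zero (linearIndependent_fun_pow (R := F) he)
  refine ⟨γ, γ ^ N, ?_⟩
  simpa only [Pi.pow_apply, ← pow_mul, ← pow_add] using hγ

theorem stmt_19_general (m n g : ℕ)
    (hg : g = (n - 1) * (m * (m - 1) / 2) - (m - 1)) :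
    Fintype.card (Σ k : Fin (m - 1), Fin (((k : ℕ) + 1) * (n - 1) - 1)) = g ∧
    ∃ γ μ : (Σ k : Fin (m - 1), Fin (((k : ℕ) + 1) * (n - 1) - 1)) → ℂ,
      (Matrix.of fun s c : (Σ k : Fin (m - 1), Fin (((k : ℕ) + 1) * (n - 1) - 1)) =>
          μ s ^ (m - ((c.1 : ℕ) + 2)) * γ s ^ (c.2 : ℕ)).det ≠ 0 := by
  refine ⟨?_, exists_det_pow_mul_pow_ne_zero ?_⟩
  · simp only [Fintype.card_sigma, Fintype.card_fin]
    rw [Fin.sum_univ_eq_sum_range (fun k => (k + 1) * (n - 1) - 1),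
      sum_range_succ_mul_sub_one_eq, hg]
  · rintro ⟨k, a⟩ ⟨k', a'⟩ h
    obtain ⟨hk, ha⟩ := Prod.mk.inj h
    obtain rfl : k = k' := Fin.ext (by have := k.2; have := k'.2; dsimp at hk; omega)
    obtain rfl : a = a' := Fin.ext ha
    rfl

/-- Genericity of the interpolation determinant: the index type of pairs `(k,a)` with
`2 ≤ k ≤ m`, `0 ≤ a ≤ (k−1)(n−1)−2` has exactly `g = (n−1)m(m−1)/2 − (m−1)` elements,
and there exist complex values `γ_s, μ_s` for which the `g×g` matrix with entries
`μ_s^{m−k} γ_s^a` is invertible. -/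
theorem stmt_19 (m n g : ℕ) (hm : 2 ≤ m) (hn : 2 ≤ n)
    (hg : g = (n - 1) * (m * (m - 1) / 2) - (m - 1)) (hg1 : 1 ≤ g) :
    Fintype.card (Σ k : Fin (m - 1), Fin (((k : ℕ) + 1) * (n - 1) - 1)) = g ∧
    ∃ γ μ : (Σ k : Fin (m - 1), Fin (((k : ℕ) + 1) * (n - 1) - 1)) → ℂ,
      (Matrix.of fun s c : (Σ k : Fin (m - 1), Fin (((k : ℕ) + 1) * (n - 1) - 1)) =>
          μ s ^ (m - ((c.1 : ℕ) + 2)) * γ s ^ (c.2 : ℕ)).det ≠ 0 :=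
  stmt_19_general m n g hg
end
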